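/- arXiv:1111.5214 — 5 statements merged into one kernel-verified Lean document; each statement's English description precedes it below -/
import Mathlib

section
/- For any function x : Z[1-n, N+n] → ℝ with x(i) = 0 for all i in Z[1-n,0] ∪ Z[N+1,N+n], the sum of squares of n-th forward differences satisfies the upper bound ∑_{k=1-n}^{N} (Δⁿx(k))² ≤ 4ⁿ · ∑_{k=1}^{N} x(k)². -/
open Finset

/-- forward difference operator -/
def dd (x : ℤ → ℝ) : ℤ → ℝ := fun i => x (i + 1) - x i

/-- membership in the boundary index set `Z[1-n,0] ∪ Z[N+1,N+n]` -/
def IsBoundaryIdx (n N : ℕ) (i : ℤ) : Prop :=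
  (1 - (n : ℤ) ≤ i ∧ i ≤ 0) ∨ ((N : ℤ) + 1 ≤ i ∧ i ≤ (N : ℤ) + n)

lemma dd_iter_zero (n : ℕ) : ∀ (x : ℤ → ℝ) (k : ℤ),
    (∀ j : ℤ, k ≤ j → j ≤ k + n → x j = 0) → dd^[n] x k = 0 := by
  induction n with
  | zero => intro x k h; simpa using h k le_rfl (by simp)
  | succ n ih =>
    intro x k h
    rw [Function.iterate_succ_apply]
    exact ih (dd x) k (fun j hj1 hj2 => by
      simp only [dd, h j hj1 (by omega), h (j+1) (by omega) (by push_cast; omega), sub_zero])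

lemma key_step (a b : ℤ) (hab : a ≤ b) (y : ℤ → ℝ) (ha : y (a - 1) = 0)
    (hb : y (b + 1) = 0) :
    ∑ k ∈ Finset.Icc (a - 1) b, (dd y k) ^ 2 ≤ 4 * ∑ k ∈ Finset.Icc a b, (y k) ^ 2 := by
  have h1 : ∑ k ∈ Finset.Icc (a - 1) b, (dd y k) ^ 2
      ≤ ∑ k ∈ Finset.Icc (a - 1) b, (2 * (y (k + 1)) ^ 2 + 2 * (y k) ^ 2) := by
    apply Finset.sum_le_sum
    intro k _
    simp only [dd]
    nlinarith [sq_nonneg (y (k+1) + y k)]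
  have h2 : ∑ k ∈ Finset.Icc (a - 1) b, (y (k + 1)) ^ 2
      = ∑ k ∈ Finset.Icc a (b + 1), (y k) ^ 2 := by
    rw [show Finset.Icc a (b+1) = (Finset.Icc (a-1) b).map ⟨fun k => k + 1, add_left_injective 1⟩ by
      ext j
      simp only [Finset.mem_Icc, Finset.mem_map, Function.Embedding.coeFn_mk]
      constructor
      · intro h; exact ⟨j - 1, ⟨by omega, by omega⟩, by ring⟩
      · rintro ⟨c, hc, rfl⟩; omega]
    rw [Finset.sum_map]
    rfl
  have h3 : ∑ k ∈ Finset.Icc a (b + 1), (y k) ^ 2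
      = ∑ k ∈ Finset.Icc a b, (y k) ^ 2 + (y (b+1)) ^ 2 := by
    have hins : Finset.Icc a (b + 1) = insert (b + 1) (Finset.Icc a b) := by
      ext j; simp only [Finset.mem_Icc, Finset.mem_insert]; omega
    rw [hins, Finset.sum_insert (by simp only [Finset.mem_Icc]; omega), add_comm]
  have h4 : ∑ k ∈ Finset.Icc (a - 1) b, (y k) ^ 2
      = (y (a-1)) ^ 2 + ∑ k ∈ Finset.Icc a b, (y k) ^ 2 := by
    have hins : Finset.Icc (a - 1) b = insert (a - 1) (Finset.Icc a b) := by
      ext j; simp only [Finset.mem_Icc, Finset.mem_insert]; omega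
    rw [hins, Finset.sum_insert (by simp only [Finset.mem_Icc]; omega)]
  calc ∑ k ∈ Finset.Icc (a - 1) b, (dd y k) ^ 2
      ≤ ∑ k ∈ Finset.Icc (a - 1) b, (2 * (y (k + 1)) ^ 2 + 2 * (y k) ^ 2) := h1
    _ = 2 * ∑ k ∈ Finset.Icc (a - 1) b, (y (k + 1)) ^ 2
        + 2 * ∑ k ∈ Finset.Icc (a - 1) b, (y k) ^ 2 := by
        rw [Finset.sum_add_distrib, Finset.mul_sum, Finset.mul_sum]
    _ = 4 * ∑ k ∈ Finset.Icc a b, (y k) ^ 2 := by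
        rw [h2, h3, h4, ha, hb]; ring

theorem stmt0 (n N : ℕ) (hn : 1 ≤ n) (hN : 2 ≤ N) (x : ℤ → ℝ)
    (hx : ∀ i : ℤ, IsBoundaryIdx n N i → x i = 0) :
    ∑ k ∈ Finset.Icc (1 - (n : ℤ)) (N : ℤ), (dd^[n] x k) ^ 2
      ≤ 4 ^ n * ∑ k ∈ Finset.Icc (1 : ℤ) (N : ℤ), (x k) ^ 2 := by
  clear hn
  induction n generalizing x with
  | zero =>
    simp only [pow_zero, one_mul, Function.iterate_zero, id_eq, Nat.cast_zero, sub_zero]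
    exact le_rfl
  | succ n ih =>
    set y := dd^[n] x with hy
    have hsub : ∀ i : ℤ, IsBoundaryIdx n N i → x i = 0 := by
      intro i hi
      apply hx
      rcases hi with ⟨h1, h2⟩ | ⟨h1, h2⟩
      · exact Or.inl ⟨by push_cast; omega, h2⟩
      · exact Or.inr ⟨h1, by push_cast; omega⟩
    have ha : y (1 - ((n:ℤ)+1) - 1 + 1) = 0 := by
      apply dd_iter_zero
      intro j hj1 hj2
      apply hx
      exact Or.inl ⟨by push_cast at *; omega, by omega⟩
    have hb : y ((N:ℤ) + 1) = 0 := by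
      apply dd_iter_zero
      intro j hj1 hj2
      apply hx
      exact Or.inr ⟨hj1, by push_cast at *; omega⟩
    have heq : ∀ k : ℤ, dd^[n+1] x k = dd y k := by
      intro k; rw [Function.iterate_succ_apply']
    have hicc : (1 : ℤ) - ((n:ℕ)+1 : ℕ) = (1 - (n:ℤ)) - 1 := by push_cast; ring
    calc ∑ k ∈ Finset.Icc (1 - (((n:ℕ)+1 : ℕ):ℤ)) (N:ℤ), (dd^[n+1] x k) ^ 2
        = ∑ k ∈ Finset.Icc ((1 - (n:ℤ)) - 1) (N:ℤ), (dd y k) ^ 2 := by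
          rw [hicc]; exact Finset.sum_congr rfl fun k _ => by rw [heq]
      _ ≤ 4 * ∑ k ∈ Finset.Icc (1 - (n:ℤ)) (N:ℤ), (y k) ^ 2 := by
          apply key_step _ _ (by omega) y
          · convert ha using 2; ring
          · exact hb
      _ ≤ 4 * (4 ^ n * ∑ k ∈ Finset.Icc (1 : ℤ) (N:ℤ), (x k) ^ 2) := by
          have := ih x hsub
          linarith
      _ = 4 ^ (n+1) * ∑ k ∈ Finset.Icc (1 : ℤ) (N:ℤ), (x k) ^ 2 := by ring
end

section
/- A point x₀ ∈ E is a critical point of J (i.e., J'(x₀) = 0) if and only if x₀ solves the discrete boundary value problem Δⁿ(p(k-n)Δⁿx(k-n)) + (-1)^{n+1} f(k, x(k)) = 0 for all k ∈ Z[1,N], with x(i) = 0 for i ∈ Z[1-n,0] ∪ Z[N+1,N+n]. -/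
open Finset

/-- extension of `v : Fin N → ℝ` to a function on `ℤ` supported on `Z[1,N]`
(thus vanishing on `Z[1-n,0] ∪ Z[N+1,N+n]`); this realizes the space `E`. -/
noncomputable def extendE (N : ℕ) (v : Fin N → ℝ) : ℤ → ℝ := fun i =>
  if h : 0 ≤ i - 1 ∧ (i - 1).toNat < N then v ⟨(i - 1).toNat, h.2⟩ else 0

/-- the norm of the space `E`: `‖x‖ = (∑_{k=1}^N x(k)²)^{1/2}` -/
noncomputable def normE (N : ℕ) (v : Fin N → ℝ) : ℝ :=
  Real.sqrt (∑ k ∈ Finset.Icc (1 : ℤ) (N : ℤ), (extendE N v k) ^ 2)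

/-- `F(k,s) = ∫₀ˢ f(k,t) dt` -/
noncomputable def Ffun (f : ℤ → ℝ → ℝ) (k : ℤ) (s : ℝ) : ℝ := ∫ t in (0 : ℝ)..s, f k t

/-- the action functional `J` -/
noncomputable def Jfun (n N : ℕ) (p : ℤ → ℝ) (F : ℤ → ℝ → ℝ) (v : Fin N → ℝ) : ℝ :=
  ∑ k ∈ Finset.Icc (1 - (n : ℤ)) (N : ℤ),
    ((1 / 2 : ℝ) * p k * (dd^[n] (extendE N v) k) ^ 2 - F k (extendE N v k))

/-- `v` solves the discrete BVP
`Δⁿ(p(k-n)Δⁿx(k-n)) + (-1)^{n+1} f(k,x(k)) = 0`, `k ∈ Z[1,N]`,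
with the Dirichlet boundary conditions built into `extendE`. -/
def Solves (n N : ℕ) (p : ℤ → ℝ) (f : ℤ → ℝ → ℝ) (v : Fin N → ℝ) : Prop :=
  ∀ k ∈ Finset.Icc (1 : ℤ) (N : ℤ),
    dd^[n] (fun j => p j * dd^[n] (extendE N v) j) (k - n)
      + (-1 : ℝ) ^ (n + 1) * f k (extendE N v k) = 0

/-- coercivity: `J(x) → +∞` as `‖x‖ → ∞` -/
def CoerciveE (N : ℕ) (J : (Fin N → ℝ) → ℝ) : Prop :=
  ∀ C : ℝ, ∃ R : ℝ, ∀ v : Fin N → ℝ, R ≤ normE N v → C ≤ J v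

/-- anti-coercivity: `J(x) → −∞` as `‖x‖ → ∞` -/
def AntiCoerciveE (N : ℕ) (J : (Fin N → ℝ) → ℝ) : Prop :=
  ∀ C : ℝ, ∃ R : ℝ, ∀ v : Fin N → ℝ, R ≤ normE N v → J v ≤ C

/-!
Differentiating termwise, `J'(x) w = ∑_{k=1-n}^{N} (p(k) Δⁿx(k) Δⁿw(k) − f(k, x(k)) w(k))`.
Since `w` vanishes on `Z[1-n,0] ∪ Z[N+1,N+n]`, `n` summations by parts move every `Δ` from `w`
onto `pΔⁿx` without boundary terms, so `J'(x) w = (-1)ⁿ ∑_{k=1}^{N} r(k) w(k)` with `r` the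
residual of the boundary value problem. This vanishes for all `w` iff `r = 0` on `Z[1,N]`
(test with `w = r`).
-/

lemma dd_comp_sub (x : ℤ → ℝ) (c k : ℤ) : dd (fun j => x (j - c)) k = dd x (k - c) := by
  simp only [dd, sub_add_eq_add_sub]

def ddₗ : Module.End ℝ (ℤ → ℝ) where
  toFun := dd
  map_add' x y := by
    funext i
    simp only [dd, Pi.add_apply]
    ring
  map_smul' c x := by
    funext i
    simp only [dd, Pi.smul_apply, smul_eq_mul, RingHom.id_apply]
    ring

@[simp]
lemma coe_ddₗ : ⇑ddₗ = dd := rfl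

lemma extendE_eq_zero_of_notMem {N : ℕ} (v : Fin N → ℝ) {k : ℤ} (hk : k ∉ Icc (1 : ℤ) N) :
    extendE N v k = 0 := by
  rw [extendE, dif_neg]
  rintro ⟨h1, h2⟩
  exact hk (mem_Icc.2 ⟨by omega, by omega⟩)

lemma extendE_shift_apply {N : ℕ} (r : ℤ → ℝ) {k : ℤ} (hk : k ∈ Icc (1 : ℤ) N) :
    extendE N (fun i => r (i + 1)) k = r k := by
  rw [mem_Icc] at hk
  rw [extendE, dif_pos ⟨by omega, by omega⟩]
  congr 1
  simp only [Int.toNat_of_nonneg (by omega : 0 ≤ k - 1), sub_add_cancel]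

noncomputable def extendEₗ (N : ℕ) : (Fin N → ℝ) →ₗ[ℝ] ℤ → ℝ where
  toFun := extendE N
  map_add' v w := by
    funext k
    simp only [extendE, Pi.add_apply]
    split <;> simp
  map_smul' c v := by
    funext k
    simp only [extendE, Pi.smul_apply, smul_eq_mul, RingHom.id_apply]
    split <;> simp

@[simp]
lemma coe_extendEₗ (N : ℕ) : ⇑(extendEₗ N) = extendE N := rfl

lemma sum_mul_dd_of_support (g e : ℤ → ℝ) (a b : ℤ) (he : ∀ k ∉ Icc a b, e k = 0) :
    ∑ k ∈ Icc (a - 1) b, g k * dd e k = -∑ k ∈ Icc a b, dd g (k - 1) * e k := by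
  have hshift : ∑ k ∈ Icc (a - 1) b, g k * e (k + 1) = ∑ k ∈ Icc a b, g (k - 1) * e k :=
    calc ∑ k ∈ Icc (a - 1) b, g k * e (k + 1)
        = ∑ k ∈ Icc a (b + 1), g (k - 1) * e k := by
          rw [show Icc a (b + 1) = (Icc (a - 1) b).map (addRightEmbedding 1) by simp, sum_map]
          simp
      _ = ∑ k ∈ Icc a b, g (k - 1) * e k :=
          (sum_subset (Icc_subset_Icc_right (by omega)) fun k _ hk => by
            rw [he k hk, mul_zero]).symm
  have hdrop : ∑ k ∈ Icc (a - 1) b, g k * e k = ∑ k ∈ Icc a b, g k * e k :=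
    (sum_subset (Icc_subset_Icc_left (by omega)) fun k _ hk => by rw [he k hk, mul_zero]).symm
  simp only [dd, mul_sub, sum_sub_distrib, hshift, hdrop, sub_mul, sub_add_cancel, neg_sub]

lemma sum_mul_iterate_dd_of_support (n : ℕ) (g e : ℤ → ℝ) (a b : ℤ)
    (he : ∀ k ∉ Icc a b, e k = 0) :
    ∑ k ∈ Icc (a - n) b, g k * dd^[n] e k
      = (-1) ^ n * ∑ k ∈ Icc a b, dd^[n] g (k - n) * e k := by
  induction n generalizing e a with
  | zero => simp
  | succ n ih =>
    have hde : ∀ k ∉ Icc (a - 1) b, dd e k = 0 := by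
      intro k hk
      rw [mem_Icc] at hk
      simp only [dd, he k (by rw [mem_Icc]; omega), he (k + 1) (by rw [mem_Icc]; omega), sub_zero]
    have hback (k : ℤ) :
        dd (fun j => dd^[n] g (j - n)) (k - 1) = dd^[n + 1] g (k - (n + 1 : ℕ)) := by
      rw [dd_comp_sub, ← Function.iterate_succ_apply' dd, Nat.cast_succ, sub_sub, add_comm 1]
    calc ∑ k ∈ Icc (a - (n + 1 : ℕ)) b, g k * dd^[n + 1] e k
        = ∑ k ∈ Icc (a - 1 - n) b, g k * dd^[n] (dd e) k := by
          rw [show a - ((n + 1 : ℕ) : ℤ) = a - 1 - n by push_cast; ring]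
          rfl
      _ = (-1) ^ n * ∑ k ∈ Icc (a - 1) b, dd^[n] g (k - n) * dd e k := ih (dd e) (a - 1) hde
      _ = (-1) ^ (n + 1) * ∑ k ∈ Icc a b, dd^[n + 1] g (k - (n + 1 : ℕ)) * e k := by
          rw [sum_mul_dd_of_support _ e a b he, pow_succ]
          simp only [hback]
          ring

noncomputable def evalIterDD (n N : ℕ) (k : ℤ) : (Fin N → ℝ) →L[ℝ] ℝ :=
  LinearMap.toContinuousLinearMap (LinearMap.proj k ∘ₗ (ddₗ ^ n) ∘ₗ extendEₗ N)

@[simp]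
lemma evalIterDD_apply (n N : ℕ) (k : ℤ) (w : Fin N → ℝ) :
    evalIterDD n N k w = dd^[n] (extendE N w) k := by
  simp only [evalIterDD, LinearMap.coe_toContinuousLinearMap', LinearMap.coe_comp,
    LinearMap.coe_proj, coe_extendEₗ, Function.comp_apply, Function.eval, Module.End.pow_apply,
    coe_ddₗ]

lemma hasDerivAt_Ffun {f : ℤ → ℝ → ℝ} {k : ℤ} (hf : Continuous (f k)) (s : ℝ) :
    HasDerivAt (Ffun f k) (f k s) s :=
  (hf.integral_hasStrictDerivAt 0 s).hasDerivAt

lemma hasFDerivAt_Jfun (n N : ℕ) (p : ℤ → ℝ) {f : ℤ → ℝ → ℝ} (hf : ∀ k, Continuous (f k))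
    (v : Fin N → ℝ) :
    HasFDerivAt (Jfun n N p (Ffun f))
      (∑ k ∈ Icc (1 - (n : ℤ)) N, ((p k * dd^[n] (extendE N v) k) • evalIterDD n N k
        - f k (extendE N v k) • evalIterDD 0 N k)) v := by
  refine HasFDerivAt.fun_sum fun k _ => ?_
  have hquad := (((evalIterDD n N k).hasFDerivAt (x := v)).pow 2).const_mul (1 / 2 * p k)
  have hF := (hasDerivAt_Ffun (hf k) _).comp_hasFDerivAt v (evalIterDD 0 N k).hasFDerivAt
  simp only [evalIterDD_apply, Function.iterate_zero, id_eq] at hquad hF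
  refine (hquad.fun_sub hF).congr_fderiv ?_
  ext w
  simp only [sub_apply, smul_apply, evalIterDD_apply, smul_eq_mul, Function.iterate_zero, id_eq,
    nsmul_eq_mul]
  ring

noncomputable def bvpResidual (n N : ℕ) (p : ℤ → ℝ) (f : ℤ → ℝ → ℝ) (v : Fin N → ℝ) (k : ℤ) :
    ℝ :=
  dd^[n] (fun j => p j * dd^[n] (extendE N v) j) (k - n) + (-1) ^ (n + 1) * f k (extendE N v k)

lemma fderiv_Jfun_apply (n N : ℕ) (p : ℤ → ℝ) {f : ℤ → ℝ → ℝ} (hf : ∀ k, Continuous (f k))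
    (v w : Fin N → ℝ) :
    fderiv ℝ (Jfun n N p (Ffun f)) v w
      = (-1) ^ n * ∑ k ∈ Icc (1 : ℤ) N, bvpResidual n N p f v k * extendE N w k := by
  have hsupp : ∀ k ∉ Icc (1 : ℤ) N, extendE N w k = 0 := fun _ => extendE_eq_zero_of_notMem w
  have hpotential : ∑ k ∈ Icc (1 - (n : ℤ)) N, f k (extendE N v k) * extendE N w k
      = ∑ k ∈ Icc (1 : ℤ) N, f k (extendE N v k) * extendE N w k :=
    (sum_subset (Icc_subset_Icc_left (by omega)) fun k _ hk => by rw [hsupp k hk, mul_zero]).symm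
  have hsign : (-1 : ℝ) ^ n * (-1) ^ (n + 1) = -1 := by
    rw [pow_succ, ← mul_assoc, ← mul_pow]
    norm_num
  rw [(hasFDerivAt_Jfun n N p hf v).fderiv, _root_.sum_apply]
  simp only [sub_apply, smul_apply, evalIterDD_apply, smul_eq_mul, Function.iterate_zero, id_eq,
    sum_sub_distrib]
  rw [sum_mul_iterate_dd_of_support n _ _ 1 N hsupp, hpotential, mul_sum, mul_sum,
    ← sum_sub_distrib]
  refine sum_congr rfl fun k _ => ?_
  rw [bvpResidual]
  linear_combination -(f k (extendE N v k) * extendE N w k) * hsign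

lemma forall_sum_mul_extendE_eq_zero_iff (N : ℕ) (r : ℤ → ℝ) :
    (∀ w : Fin N → ℝ, ∑ k ∈ Icc (1 : ℤ) N, r k * extendE N w k = 0)
      ↔ ∀ k ∈ Icc (1 : ℤ) N, r k = 0 := by
  refine ⟨fun h => ?_, fun h w => sum_eq_zero fun k hk => by rw [h k hk, zero_mul]⟩
  have hsq : ∑ k ∈ Icc (1 : ℤ) N, r k * r k = 0 := by
    rw [← h fun i => r (i + 1)]
    exact sum_congr rfl fun k hk => by rw [extendE_shift_apply r hk]
  exact fun k hk =>
    mul_self_eq_zero.1 ((sum_eq_zero_iff_of_nonneg fun j _ => mul_self_nonneg (r j)).1 hsq k hk)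

theorem stmt4_general (n N : ℕ) (p : ℤ → ℝ)
    (f : ℤ → ℝ → ℝ) (hf : ∀ k, Continuous (f k)) (v : Fin N → ℝ) :
    fderiv ℝ (Jfun n N p (Ffun f)) v = 0 ↔ Solves n N p f v := by
  have hsign : (-1 : ℝ) ^ n ≠ 0 := pow_ne_zero n (by norm_num)
  simp only [ContinuousLinearMap.ext_iff, fderiv_Jfun_apply n N p hf, zero_apply, mul_eq_zero,
    hsign, false_or]
  exact forall_sum_mul_extendE_eq_zero_iff N _

theorem stmt4 (n N : ℕ) (hn : 1 ≤ n) (hN : 2 ≤ N) (p : ℤ → ℝ)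
    (f : ℤ → ℝ → ℝ) (hf : ∀ k, Continuous (f k)) (v : Fin N → ℝ) :
    fderiv ℝ (Jfun n N p (Ffun f)) v = 0 ↔ Solves n N p f v :=
  stmt4_general n N p f hf v
end

section
/- Suppose there exist constants M ≥ 0 and α < (1/2)·λ·min_k p(k) such that F(k,u) ≤ α u² for all k ∈ Z[1,N] and all |u| > M, where min_k p(k) > 0. Then J is coercive on E: J(x) → +∞ as ‖x‖ → ∞. -/
open Finset

lemma sum_sq_extendE_eq_normE_sq {N : ℕ} (v : Fin N → ℝ) {a : ℤ} (ha : a ≤ 1) :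
    ∑ k ∈ Icc a N, extendE N v k ^ 2 = normE N v ^ 2 := by
  have hsub : Icc (1 : ℤ) N ⊆ Icc a N := Icc_subset_Icc_left ha
  rw [normE, Real.sq_sqrt (sum_nonneg fun _ _ => sq_nonneg _)]
  exact (sum_subset hsub fun k _ hk => by rw [extendE_eq_zero_of_notMem v hk]; ring).symm

lemma exists_le_mul_sq_add_of_continuous {g : ℝ → ℝ} (hg : Continuous g) {M α : ℝ}
    (hgrowth : ∀ u, M < |u| → g u ≤ α * u ^ 2) : ∃ B, ∀ u, g u ≤ α * u ^ 2 + B := by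
  obtain ⟨B, hB⟩ := (isCompact_Icc (a := -M) (b := M)).bddAbove_image
    (f := fun u => g u - α * u ^ 2) (by fun_prop)
  refine ⟨max B 0, fun u => ?_⟩
  rcases le_or_gt |u| M with hu | hu
  · have := hB ⟨u, abs_le.mp hu, rfl⟩
    linarith [le_max_left B 0]
  · linarith [hgrowth u hu, le_max_right B 0]

lemma exists_le_mul_sq_extendE_add {N : ℕ} {F : ℤ → ℝ → ℝ} (hF : ∀ k, Continuous (F k))
    {M α : ℝ} (hFle : ∀ k ∈ Icc (1 : ℤ) N, ∀ u : ℝ, M < |u| → F k u ≤ α * u ^ 2) (k : ℤ) :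
    ∃ B, ∀ v : Fin N → ℝ, F k (extendE N v k) ≤ α * extendE N v k ^ 2 + B := by
  by_cases hk : k ∈ Icc (1 : ℤ) N
  · obtain ⟨B, hB⟩ := exists_le_mul_sq_add_of_continuous (hF k) (hFle k hk)
    exact ⟨B, fun v => hB _⟩
  · exact ⟨F k 0, fun v => by simp [extendE_eq_zero_of_notMem v hk]⟩

lemma mul_normE_sq_sub_le_Jfun {n N : ℕ} {p : ℤ → ℝ} {F : ℤ → ℝ → ℝ} {lam pmin α : ℝ} {B : ℤ → ℝ}
    {v : Fin N → ℝ}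
    (hpoin : lam * ∑ k ∈ Icc (1 : ℤ) N, extendE N v k ^ 2
        ≤ ∑ k ∈ Icc (1 - (n : ℤ)) N, (dd^[n] (extendE N v) k) ^ 2)
    (hpmin : 0 ≤ pmin) (hp : ∀ k ∈ Icc (1 - (n : ℤ)) N, pmin ≤ p k)
    (hB : ∀ k, F k (extendE N v k) ≤ α * extendE N v k ^ 2 + B k) :
    ((1 / 2 : ℝ) * lam * pmin - α) * normE N v ^ 2 - ∑ k ∈ Icc (1 - (n : ℤ)) N, B k
      ≤ Jfun n N p F v := by
  set x := extendE N v
  set D := dd^[n] x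
  have hS : ∑ k ∈ Icc (1 - (n : ℤ)) N, x k ^ 2 = ∑ k ∈ Icc (1 : ℤ) N, x k ^ 2 := by
    rw [sum_sq_extendE_eq_normE_sq v (by omega), sum_sq_extendE_eq_normE_sq v le_rfl]
  rw [← sum_sq_extendE_eq_normE_sq v le_rfl]
  calc ((1 / 2 : ℝ) * lam * pmin - α) * ∑ k ∈ Icc (1 : ℤ) N, x k ^ 2
        - ∑ k ∈ Icc (1 - (n : ℤ)) N, B k
      ≤ (1 / 2 : ℝ) * pmin * ∑ k ∈ Icc (1 - (n : ℤ)) N, D k ^ 2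
        - α * ∑ k ∈ Icc (1 - (n : ℤ)) N, x k ^ 2 - ∑ k ∈ Icc (1 - (n : ℤ)) N, B k := by
        rw [hS]; nlinarith [mul_le_mul_of_nonneg_left hpoin hpmin]
    _ = ∑ k ∈ Icc (1 - (n : ℤ)) N, ((1 / 2 : ℝ) * pmin * D k ^ 2 - (α * x k ^ 2 + B k)) := by
        simp only [sum_sub_distrib, sum_add_distrib, mul_sum]; ring
    _ ≤ Jfun n N p F v := sum_le_sum fun k hk => by
        nlinarith [hp k hk, hB k, sq_nonneg (D k)]

lemma coerciveE_of_mul_normE_sq_sub_le {N : ℕ} {J : (Fin N → ℝ) → ℝ} {c C₀ : ℝ} (hc : 0 < c)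
    (hJ : ∀ v, c * normE N v ^ 2 - C₀ ≤ J v) : CoerciveE N J := by
  intro C
  refine ⟨max 1 ((C + C₀) / c), fun v hv => ?_⟩
  have hone : 1 ≤ normE N v := le_trans (le_max_left _ _) hv
  have hsq : (C + C₀) / c ≤ normE N v ^ 2 :=
    calc (C + C₀) / c ≤ normE N v := le_trans (le_max_right _ _) hv
      _ ≤ normE N v ^ 2 := le_self_pow₀ hone two_ne_zero
  have := (div_le_iff₀' hc).mp hsq
  linarith [hJ v]

theorem stmt7_general (n N : ℕ) (p : ℤ → ℝ)
    (F : ℤ → ℝ → ℝ) (hF : ∀ k, Continuous (F k))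
    (lam : ℝ)
    (hpoin : ∀ v : Fin N → ℝ,
      lam * ∑ k ∈ Finset.Icc (1 : ℤ) (N : ℤ), (extendE N v k) ^ 2
        ≤ ∑ k ∈ Finset.Icc (1 - (n : ℤ)) (N : ℤ), (dd^[n] (extendE N v) k) ^ 2)
    (pmin : ℝ) (hpmin : 0 < pmin)
    (hp : ∀ k ∈ Finset.Icc (1 - (n : ℤ)) (N : ℤ), pmin ≤ p k)
    (M α : ℝ) (hα : α < (1 / 2 : ℝ) * lam * pmin)
    (hFle : ∀ k ∈ Finset.Icc (1 : ℤ) (N : ℤ), ∀ u : ℝ, M < |u| → F k u ≤ α * u ^ 2) :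
    CoerciveE N (Jfun n N p F) := by
  choose B hB using exists_le_mul_sq_extendE_add hF hFle
  exact coerciveE_of_mul_normE_sq_sub_le (sub_pos.mpr hα)
    fun v => mul_normE_sq_sub_le_Jfun (hpoin v) hpmin.le hp fun k => hB k v

theorem stmt7 (n N : ℕ) (hn : 1 ≤ n) (hN : 2 ≤ N) (p : ℤ → ℝ)
    (F : ℤ → ℝ → ℝ) (hF : ∀ k, Continuous (F k))
    (lam : ℝ) (hlam : 0 < lam)
    (hpoin : ∀ v : Fin N → ℝ,
      lam * ∑ k ∈ Finset.Icc (1 : ℤ) (N : ℤ), (extendE N v k) ^ 2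
        ≤ ∑ k ∈ Finset.Icc (1 - (n : ℤ)) (N : ℤ), (dd^[n] (extendE N v) k) ^ 2)
    (pmin : ℝ) (hpmin : 0 < pmin)
    (hp : ∀ k ∈ Finset.Icc (1 - (n : ℤ)) (N : ℤ), pmin ≤ p k)
    (M α : ℝ) (hM : 0 ≤ M) (hα : α < (1 / 2 : ℝ) * lam * pmin)
    (hFle : ∀ k ∈ Finset.Icc (1 : ℤ) (N : ℤ), ∀ u : ℝ, M < |u| → F k u ≤ α * u ^ 2) :
    CoerciveE N (Jfun n N p F) :=
  stmt7_general n N p F hF lam hpoin pmin hpmin hp M α hα hFle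
end

section
/- Suppose there exist constants M ≥ 0, α > 0, and q > 2 such that F(k,u) ≥ α|u|^q for all k ∈ Z[1,N] and all |u| > M. Then J is anti-coercive on E: J(x) → −∞ as ‖x‖ → ∞. -/
open Finset

lemma extendE_mem_of_ne (N : ℕ) (v : Fin N → ℝ) (k : ℤ) (h : extendE N v k ≠ 0) :
    k ∈ Finset.Icc (1 : ℤ) (N : ℤ) := by
  unfold extendE at h
  split at h
  · rename_i hc; simp only [Finset.mem_Icc]; omega
  · exact absurd rfl h

lemma extendE_abs_le (N : ℕ) (v : Fin N → ℝ) (j : ℤ) :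
    |extendE N v j| ≤ normE N v := by
  have hsum : ∀ k ∈ Finset.Icc (1:ℤ) (N:ℤ), (0:ℝ) ≤ (extendE N v k)^2 :=
    fun k _ => sq_nonneg _
  have key : (extendE N v j)^2 ≤ ∑ k ∈ Finset.Icc (1:ℤ) (N:ℤ), (extendE N v k)^2 := by
    by_cases hj : j ∈ Finset.Icc (1:ℤ) (N:ℤ)
    · exact Finset.single_le_sum hsum hj
    · have h0 : extendE N v j = 0 := by
        by_contra h; exact hj (extendE_mem_of_ne N v j h)
      rw [h0]; simpa using Finset.sum_nonneg hsum
  calc |extendE N v j| = Real.sqrt ((extendE N v j)^2) := (Real.sqrt_sq_eq_abs _).symm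
    _ ≤ normE N v := Real.sqrt_le_sqrt key

lemma dd_iter_abs_le : ∀ (n : ℕ) (x : ℤ → ℝ) (S : ℝ),
    (∀ j, |x j| ≤ S) → ∀ k, |dd^[n] x k| ≤ 2^n * S := by
  intro n
  induction n with
  | zero => intro x S h k; simpa using h k
  | succ m ih =>
    intro x S h k
    rw [Function.iterate_succ_apply']
    have h1 := ih x S h
    calc |dd (dd^[m] x) k| = |dd^[m] x (k+1) - dd^[m] x k| := rfl
      _ ≤ |dd^[m] x (k+1)| + |dd^[m] x k| := abs_sub _ _
      _ ≤ 2^m*S + 2^m*S := add_le_add (h1 _) (h1 _)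
      _ = 2^(m+1) * S := by ring

set_option maxHeartbeats 1000000 in
theorem stmt10 (n N : ℕ) (hn : 1 ≤ n) (hN : 2 ≤ N) (p : ℤ → ℝ)
    (F : ℤ → ℝ → ℝ) (hF : ∀ k, Continuous (F k))
    (M α q : ℝ) (hM : 0 ≤ M) (hα : 0 < α) (hq : 2 < q)
    (hFge : ∀ k ∈ Finset.Icc (1 : ℤ) (N : ℤ), ∀ u : ℝ, M < |u| → α * |u| ^ q ≤ F k u) :
    AntiCoerciveE N (Jfun n N p F) := by
  classical
  -- lower bounds for F k on [-M,M]
  have hcex : ∀ k : ℤ, ∃ c : ℝ, c ≤ 0 ∧ ∀ u : ℝ, |u| ≤ M → c ≤ F k u := by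
    intro k
    obtain ⟨u₀, hu₀, hmin⟩ := (isCompact_Icc : IsCompact (Set.Icc (-M) M)).exists_isMinOn
      ⟨0, by constructor <;> linarith⟩ (hF k).continuousOn
    refine ⟨min (F k u₀) 0, min_le_right _ _, fun u hu => ?_⟩
    have habs := abs_le.mp hu
    exact le_trans (min_le_left _ _) (hmin (Set.mem_Icc.mpr ⟨by linarith [habs.1], habs.2⟩))
  choose c hc0 hcF using hcex
  set P : ℝ := ∑ k ∈ Finset.Icc (1 - (n:ℤ)) (N:ℤ), (1/2 : ℝ) * |p k| with hP
  have hP0 : 0 ≤ P := Finset.sum_nonneg fun k _ => by positivity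
  set D : ℝ := ∑ k ∈ Finset.Icc (1 - (n:ℤ)) (N:ℤ), c k with hD
  have hsN : (0:ℝ) < Real.sqrt N := Real.sqrt_pos.mpr (by positivity)
  set sN : ℝ := Real.sqrt N with hsNdef
  set B : ℝ := P * (2^n * sN)^2 with hB
  have hB0 : 0 ≤ B := by positivity
  set m : ℝ := max ((B+1)/α) 0 with hm
  have hm0 : 0 ≤ m := le_max_right _ _
  have hmdiv : (B+1)/α ≤ m := le_max_left _ _
  intro C
  set T₀ : ℝ := 1 + M + m ^ (1/(q-2)) + |D| + |C| with hT₀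
  have hroot0 : (0:ℝ) ≤ m ^ (1/(q-2)) := Real.rpow_nonneg hm0 _
  refine ⟨T₀ * sN, fun v hRS => ?_⟩
  set x : ℤ → ℝ := extendE N v with hx
  set S : ℝ := normE N v with hS
  have hS0 : 0 ≤ S := Real.sqrt_nonneg _
  set T : ℝ := S / sN with hT
  have hT₀T : T₀ ≤ T := (le_div_iff₀ hsN).mpr hRS
  have hT1 : 1 ≤ T := by
    have h6 : (1:ℝ) ≤ T₀ := by
      have := abs_nonneg D; have := abs_nonneg C
      rw [hT₀]; linarith
    linarith
  have hTM : M < T := by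
    have : M + 1 ≤ T₀ := by
      have := abs_nonneg D; have := abs_nonneg C
      simp only [hT₀]; linarith
    linarith
  have hT0 : 0 < T := by linarith
  have hSsq : S^2 = ∑ k ∈ Finset.Icc (1:ℤ) (N:ℤ), (x k)^2 := by
    rw [hS, normE]; exact Real.sq_sqrt (Finset.sum_nonneg fun k _ => sq_nonneg _)
  have hSTsN : S = T * sN := (div_mul_cancel₀ S (ne_of_gt hsN)).symm
  -- find a big coordinate
  have hcard : (Finset.Icc (1:ℤ) (N:ℤ)).card = N := by
    rw [Int.card_Icc]; omega
  have havg : ∃ k₀ ∈ Finset.Icc (1:ℤ) (N:ℤ), S^2 / N ≤ (x k₀)^2 := by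
    apply Finset.exists_le_of_sum_le ⟨1, by simp; omega⟩
    rw [Finset.sum_const, hcard, nsmul_eq_mul, hSsq]
    rw [← hSsq, mul_div_cancel₀]
    positivity
  obtain ⟨k₀, hk₀, hk₀big⟩ := havg
  have hxk₀ : T ≤ |x k₀| := by
    have h1 : Real.sqrt (S^2 / N) = S / sN := by
      rw [Real.sqrt_div (sq_nonneg S), Real.sqrt_sq hS0, hsNdef]
    calc T = Real.sqrt (S^2 / N) := by rw [h1, hT]
      _ ≤ Real.sqrt ((x k₀)^2) := Real.sqrt_le_sqrt hk₀big
      _ = |x k₀| := Real.sqrt_sq_eq_abs _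
  have hMlt : M < |x k₀| := lt_of_lt_of_le hTM hxk₀
  have hd : ∀ k, |dd^[n] x k| ≤ 2^n * S :=
    dd_iter_abs_le n x S (extendE_abs_le N v)
  -- bound on p-part
  have h1 : ∑ k ∈ Finset.Icc (1-(n:ℤ)) (N:ℤ), (1/2 : ℝ) * p k * (dd^[n] x k)^2
      ≤ B * T^2 := by
    have step : ∑ k ∈ Finset.Icc (1-(n:ℤ)) (N:ℤ), (1/2 : ℝ) * p k * (dd^[n] x k)^2
        ≤ ∑ k ∈ Finset.Icc (1-(n:ℤ)) (N:ℤ), (1/2 : ℝ) * |p k| * (2^n * S)^2 := by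
      apply Finset.sum_le_sum
      intro k _
      have hdk := hd k
      have habs := abs_le.mp hdk
      have hsq : (dd^[n] x k)^2 ≤ (2^n * S)^2 := sq_le_sq' habs.1 habs.2
      nlinarith [le_abs_self (p k), abs_nonneg (p k), sq_nonneg (dd^[n] x k)]
    calc ∑ k ∈ Finset.Icc (1-(n:ℤ)) (N:ℤ), (1/2 : ℝ) * p k * (dd^[n] x k)^2
        ≤ ∑ k ∈ Finset.Icc (1-(n:ℤ)) (N:ℤ), (1/2 : ℝ) * |p k| * (2^n * S)^2 := step
      _ = P * (2^n * S)^2 := by rw [hP, ← Finset.sum_mul]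
      _ = B * T^2 := by rw [hSTsN, hB]; ring
  -- bound on F-part
  have hk₀mem' : k₀ ∈ Finset.Icc (1-(n:ℤ)) (N:ℤ) := by
    simp only [Finset.mem_Icc] at hk₀ ⊢; omega
  have h2 : α * T^q + D ≤ ∑ k ∈ Finset.Icc (1-(n:ℤ)) (N:ℤ), F k (x k) := by
    rw [← Finset.add_sum_erase _ _ hk₀mem']
    apply add_le_add
    · calc α * T^q ≤ α * |x k₀|^q :=
          mul_le_mul_of_nonneg_left
            (Real.rpow_le_rpow hT0.le hxk₀ (by linarith)) hα.le
        _ ≤ F k₀ (x k₀) := hFge k₀ hk₀ _ hMlt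
    · have hsplit : D = c k₀ + ∑ k ∈ (Finset.Icc (1-(n:ℤ)) (N:ℤ)).erase k₀, c k :=
        (Finset.add_sum_erase _ _ hk₀mem').symm
      have hDle : D ≤ ∑ k ∈ (Finset.Icc (1-(n:ℤ)) (N:ℤ)).erase k₀, c k := by
        have := hc0 k₀; linarith [hsplit.le]
      refine le_trans hDle (Finset.sum_le_sum fun k _ => ?_)
      by_cases hk : |x k| ≤ M
      · exact hcF k _ hk
      · push_neg at hk
        have hxne : x k ≠ 0 := by
          intro h0; rw [h0] at hk; simp at hk; linarith
        have hkIcc := extendE_mem_of_ne N v k hxne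
        calc c k ≤ 0 := hc0 k
          _ ≤ α * |x k|^q := by positivity
          _ ≤ F k (x k) := hFge k hkIcc _ hk
  -- combine
  have hJ : Jfun n N p F v ≤ B * T^2 - (α * T^q + D) := by
    rw [Jfun, Finset.sum_sub_distrib]
    exact sub_le_sub h1 h2
  -- final analytic estimate
  clear_value T S x B m D P sN
  clear hd h1 h2 hSsq hk₀big hxk₀ hMlt hk₀ hk₀mem' hcard hcF hFge hF
  have hq2 : (0:ℝ) < q - 2 := by linarith
  have hmle : m ≤ T ^ (q-2) := by
    have e1 : (m ^ (1/(q-2))) ^ (q-2) = m := by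
      rw [← Real.rpow_mul hm0, one_div_mul_cancel (ne_of_gt hq2), Real.rpow_one]
    have hrootT : m ^ (1/(q-2)) ≤ T := by
      have h7 : m ^ (1/(q-2)) ≤ T₀ := by
        have := abs_nonneg D; have := abs_nonneg C
        rw [hT₀]; linarith
      exact le_trans h7 hT₀T
    calc m = (m ^ (1/(q-2))) ^ (q-2) := e1.symm
      _ ≤ T ^ (q-2) := Real.rpow_le_rpow hroot0 hrootT hq2.le
  have hBT : B + 1 ≤ α * T ^ (q-2) := by
    have h4 : (B+1)/α ≤ T ^ (q-2) := le_trans hmdiv hmle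
    calc B + 1 = α * ((B+1)/α) := by field_simp
      _ ≤ α * T ^ (q-2) := mul_le_mul_of_nonneg_left h4 hα.le
  have hsplitT : T^q = T^(2:ℕ) * T^(q-2) := by
    rw [← Real.rpow_natCast T 2, ← Real.rpow_add hT0]
    norm_num
  have hkey : B * T^2 - (α * T^q + D) ≤ C := by
    have hTsq : (0:ℝ) ≤ T^2 := sq_nonneg T
    have hgrow : (B+1) * T^2 ≤ α * T^q := by
      rw [hsplitT]
      calc (B+1) * T^2 ≤ (α * T^(q-2)) * T^2 :=
          mul_le_mul_of_nonneg_right hBT hTsq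
        _ = α * (T^(2:ℕ) * T^(q-2)) := by ring
    have hTbig : |D| + |C| ≤ T := by
      have h8 : |D| + |C| ≤ T₀ := by
        rw [hT₀]; linarith
      exact le_trans h8 hT₀T
    have hT2T : T ≤ T^2 := by nlinarith
    have h5 : -(T^2) - D ≤ C := by
      have := neg_abs_le D; have := neg_abs_le C
      linarith
    linarith
  linarith
end

section
/- Assume J is anti-coercive on E, J is C¹, and there exists c < λ·min_k p(k) with max_{k∈Z[1,N]} lim_{u→0} f(k,u)/u ≤ c (the limits exist). Then there exists δ > 0 such that J(x) ≥ ((λ·min_k p(k) − c)/4)·‖x‖² for all x with ‖x‖ ≤ δ; in particular J(x) > 0 = J(0) on the sphere ‖x‖ = δ. -/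
open Finset

open Filter Topology

/-!
On the segment between `0` and `s`, a continuous `g` with `g t / t ≤ M` lies below `t ↦ M t` for
`t > 0` and above it for `t < 0`, so `∫₀ˢ g ≤ M s² / 2`. Near `x = 0` every coordinate is small,
so with `M` halfway between `c` and `λ p_min` this bounds the potential part of `J` by
`(M / 2) ‖x‖²`, while the Poincaré inequality bounds the kinetic part below by `(λ p_min / 2) ‖x‖²`.
-/

theorem intervalIntegral_le_half_mul_sq {g : ℝ → ℝ} (hg : Continuous g) {M s : ℝ}
    (h : ∀ t, t ≠ 0 → |t| < |s| → g t / t ≤ M) :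
    ∫ t in (0 : ℝ)..s, g t ≤ M / 2 * s ^ 2 := by
  have hlin : ∀ a b : ℝ, ∫ t in a..b, M * t = M / 2 * (b ^ 2 - a ^ 2) := fun a b => by
    rw [intervalIntegral.integral_const_mul, integral_id]; ring
  have hlin_int : ∀ a b : ℝ, IntervalIntegrable (fun t => M * t) MeasureTheory.volume a b :=
    fun a b => (continuous_const.mul continuous_id).intervalIntegrable a b
  rcases le_or_gt 0 s with hs | hs
  · have hmono : ∫ t in (0 : ℝ)..s, g t ≤ ∫ t in (0 : ℝ)..s, M * t :=
      intervalIntegral.integral_mono_on_of_le_Ioo hs (hg.intervalIntegrable 0 s) (hlin_int 0 s)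
        fun t ⟨ht0, _⟩ => (div_le_iff₀ ht0).mp <|
          h t ht0.ne' (by rwa [abs_of_pos ht0, abs_of_nonneg hs])
    simpa [hlin] using hmono
  · have hmono : ∫ t in s..(0 : ℝ), M * t ≤ ∫ t in s..(0 : ℝ), g t :=
      intervalIntegral.integral_mono_on_of_le_Ioo hs.le (hlin_int s 0) (hg.intervalIntegrable s 0)
        fun t ⟨_, ht0⟩ => (div_le_iff_of_neg ht0).mp <|
          h t ht0.ne (by rw [abs_of_neg ht0, abs_of_neg hs]; linarith)
    rw [hlin] at hmono
    rw [intervalIntegral.integral_symm]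
    linarith

theorem exists_pos_forall_div_le_of_tendsto {ι : Type*} (I : Finset ι) {g : ι → ℝ → ℝ}
    {L : ι → ℝ} {M : ℝ} (hg : ∀ k ∈ I, Tendsto (fun u => g k u / u) (𝓝[≠] 0) (𝓝 (L k)))
    (hLM : ∀ k ∈ I, L k < M) :
    ∃ δ > 0, ∀ k ∈ I, ∀ u, u ≠ 0 → |u| < δ → g k u / u ≤ M := by
  have hev : ∀ᶠ u in 𝓝[≠] (0 : ℝ), ∀ k ∈ I, g k u / u ≤ M :=
    (eventually_all_finset I).mpr fun k hk =>
      ((hg k hk).eventually_lt_const (hLM k hk)).mono fun _ hu => hu.le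
  obtain ⟨δ, hδ, hball⟩ := Metric.mem_nhdsWithin_iff.mp hev
  exact ⟨δ, hδ, fun k hk u hu0 hu => hball ⟨by simpa using hu, hu0⟩ k hk⟩

section SpaceE

variable {N : ℕ} (v : Fin N → ℝ)

theorem extendE_of_lt_one {k : ℤ} (hk : k < 1) : extendE N v k = 0 :=
  dif_neg fun h => by omega

theorem normE_sq : normE N v ^ 2 = ∑ k ∈ Icc (1 : ℤ) N, extendE N v k ^ 2 :=
  Real.sq_sqrt (sum_nonneg fun _ _ => sq_nonneg _)

theorem abs_extendE_le_normE {k : ℤ} (hk : k ∈ Icc (1 : ℤ) N) : |extendE N v k| ≤ normE N v := by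
  rw [← Real.sqrt_sq_eq_abs]
  exact Real.sqrt_le_sqrt (single_le_sum (fun i _ => sq_nonneg (extendE N v i)) hk)

theorem sum_Ffun_extendE_le (n : ℕ) {f : ℤ → ℝ → ℝ} (hf : ∀ k, Continuous (f k)) {M : ℝ}
    (hM : ∀ k ∈ Icc (1 : ℤ) N, ∀ t, t ≠ 0 → |t| < |extendE N v k| → f k t / t ≤ M) :
    ∑ k ∈ Icc (1 - (n : ℤ)) N, Ffun f k (extendE N v k) ≤ M / 2 * normE N v ^ 2 := by
  have hsupport : ∀ k ∈ Icc (1 - (n : ℤ)) N, k ∉ Icc (1 : ℤ) N → Ffun f k (extendE N v k) = 0 := by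
    intro k hk hk'
    rw [extendE_of_lt_one v (by simp only [mem_Icc] at hk hk'; omega), Ffun,
      intervalIntegral.integral_same]
  rw [← sum_subset (Icc_subset_Icc (by omega) le_rfl) hsupport, normE_sq, mul_sum]
  exact sum_le_sum fun k hk => intervalIntegral_le_half_mul_sq (hf k) (hM k hk)

theorem Jfun_lower_bound {n : ℕ} {p : ℤ → ℝ} {f : ℤ → ℝ → ℝ} (hf : ∀ k, Continuous (f k))
    {lam pmin M : ℝ}
    (hpoin : lam * ∑ k ∈ Icc (1 : ℤ) N, extendE N v k ^ 2
        ≤ ∑ k ∈ Icc (1 - (n : ℤ)) N, (dd^[n] (extendE N v) k) ^ 2)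
    (hpmin : 0 ≤ pmin) (hp : ∀ k ∈ Icc (1 - (n : ℤ)) N, pmin ≤ p k)
    (hM : ∀ k ∈ Icc (1 : ℤ) N, ∀ t, t ≠ 0 → |t| < |extendE N v k| → f k t / t ≤ M) :
    (lam * pmin - M) / 2 * normE N v ^ 2 ≤ Jfun n N p (Ffun f) v := by
  have hkinetic : lam * pmin / 2 * normE N v ^ 2
      ≤ ∑ k ∈ Icc (1 - (n : ℤ)) N, 1 / 2 * p k * (dd^[n] (extendE N v) k) ^ 2 :=
    calc lam * pmin / 2 * normE N v ^ 2
        = pmin / 2 * (lam * ∑ k ∈ Icc (1 : ℤ) N, extendE N v k ^ 2) := by rw [normE_sq]; ring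
      _ ≤ pmin / 2 * ∑ k ∈ Icc (1 - (n : ℤ)) N, (dd^[n] (extendE N v) k) ^ 2 := by gcongr
      _ = ∑ k ∈ Icc (1 - (n : ℤ)) N, pmin / 2 * (dd^[n] (extendE N v) k) ^ 2 := mul_sum _ _ _
      _ ≤ _ := sum_le_sum fun k hk =>
        mul_le_mul_of_nonneg_right (by linarith [hp k hk]) (sq_nonneg _)
  have hpotential := sum_Ffun_extendE_le v n hf hM
  rw [Jfun, sum_sub_distrib]
  linarith

end SpaceE

theorem stmt17_general (n N : ℕ) (p : ℤ → ℝ)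
    (f : ℤ → ℝ → ℝ) (hf : ∀ k, Continuous (f k))
    (lam : ℝ)
    (hpoin : ∀ v : Fin N → ℝ,
      lam * ∑ k ∈ Finset.Icc (1 : ℤ) (N : ℤ), (extendE N v k) ^ 2
        ≤ ∑ k ∈ Finset.Icc (1 - (n : ℤ)) (N : ℤ), (dd^[n] (extendE N v) k) ^ 2)
    (pmin : ℝ) (hpmin : 0 < pmin)
    (hp : ∀ k ∈ Finset.Icc (1 - (n : ℤ)) (N : ℤ), pmin ≤ p k)
    (L : ℤ → ℝ) (c : ℝ) (hc : c < lam * pmin)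
    (hlim : ∀ k ∈ Finset.Icc (1 : ℤ) (N : ℤ),
      Filter.Tendsto (fun u : ℝ => f k u / u) (nhdsWithin 0 {(0 : ℝ)}ᶜ) (nhds (L k)))
    (hLc : ∀ k ∈ Finset.Icc (1 : ℤ) (N : ℤ), L k ≤ c) :
    ∃ δ : ℝ, 0 < δ ∧
      (∀ v : Fin N → ℝ, normE N v ≤ δ →
        (lam * pmin - c) / 4 * (normE N v) ^ 2 ≤ Jfun n N p (Ffun f) v) ∧
      (∀ v : Fin N → ℝ, normE N v = δ → 0 < Jfun n N p (Ffun f) v) := by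
  obtain ⟨δ, hδ, hsmall⟩ := exists_pos_forall_div_le_of_tendsto (Icc (1 : ℤ) N) hlim
    (M := (c + lam * pmin) / 2) fun k hk => by linarith [hLc k hk]
  have hbound : ∀ v : Fin N → ℝ, normE N v ≤ δ →
      (lam * pmin - c) / 4 * normE N v ^ 2 ≤ Jfun n N p (Ffun f) v := fun v hv =>
    calc (lam * pmin - c) / 4 * normE N v ^ 2
        = (lam * pmin - (c + lam * pmin) / 2) / 2 * normE N v ^ 2 := by ring
      _ ≤ Jfun n N p (Ffun f) v :=
        Jfun_lower_bound v hf (hpoin v) hpmin.le hp fun k hk t ht0 ht =>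
          hsmall k hk t ht0 (by linarith [abs_extendE_le_normE v hk])
  refine ⟨δ, hδ, hbound, fun v hv => ?_⟩
  have hpos : 0 < (lam * pmin - c) / 4 * normE N v ^ 2 := by
    have : 0 < lam * pmin - c := by linarith
    rw [hv]; positivity
  exact hpos.trans_le (hbound v hv.le)

theorem stmt17 (n N : ℕ) (hn : 1 ≤ n) (hN : 2 ≤ N) (p : ℤ → ℝ)
    (f : ℤ → ℝ → ℝ) (hf : ∀ k, Continuous (f k)) (hf0 : ∀ k, f k 0 = 0)
    (lam : ℝ) (hlam : 0 < lam)
    (hpoin : ∀ v : Fin N → ℝ,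
      lam * ∑ k ∈ Finset.Icc (1 : ℤ) (N : ℤ), (extendE N v k) ^ 2
        ≤ ∑ k ∈ Finset.Icc (1 - (n : ℤ)) (N : ℤ), (dd^[n] (extendE N v) k) ^ 2)
    (pmin : ℝ) (hpmin : 0 < pmin)
    (hp : ∀ k ∈ Finset.Icc (1 - (n : ℤ)) (N : ℤ), pmin ≤ p k)
    (hanti : AntiCoerciveE N (Jfun n N p (Ffun f)))
    (hC1 : ContDiff ℝ 1 (Jfun n N p (Ffun f)))
    (L : ℤ → ℝ) (c : ℝ) (hc : c < lam * pmin)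
    (hlim : ∀ k ∈ Finset.Icc (1 : ℤ) (N : ℤ),
      Filter.Tendsto (fun u : ℝ => f k u / u) (nhdsWithin 0 {(0 : ℝ)}ᶜ) (nhds (L k)))
    (hLc : ∀ k ∈ Finset.Icc (1 : ℤ) (N : ℤ), L k ≤ c) :
    ∃ δ : ℝ, 0 < δ ∧
      (∀ v : Fin N → ℝ, normE N v ≤ δ →
        (lam * pmin - c) / 4 * (normE N v) ^ 2 ≤ Jfun n N p (Ffun f) v) ∧
      (∀ v : Fin N → ℝ, normE N v = δ → 0 < Jfun n N p (Ffun f) v) :=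
  stmt17_general n N p f hf lam hpoin pmin hpmin hp L c hc hlim hLc
end
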